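/- arXiv:1403.1977 — 5 statements merged into one kernel-verified Lean document; each statement's English description precedes it below -/
import Mathlib

section
/- Let V be a real inner product space with orthogonal complex structure J and J-invariant subspace D with projection p. With Π, Φ, Ψ defined as above and R = aΠ + bΦ + cΨ for real numbers a, b, c, every unit vector X ∈ V satisfies R(X, JX, JX, X) = a + b|pX|² + c|pX|⁴. -/
open RealInnerProductSpace

theorem stmt4 {V : Type*} [NormedAddCommGroup V] [InnerProductSpace ℝ V]
    (J : V →ₗ[ℝ] V) (hJ2 : ∀ X : V, J (J X) = -X)
    (hJi : ∀ X Y : V, ⟪J X, J Y⟫ = ⟪X, Y⟫)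
    (p : V →ₗ[ℝ] V) (hp2 : ∀ X : V, p (p X) = p X)
    (hpsa : ∀ X Y : V, ⟪p X, Y⟫ = ⟪X, p Y⟫)
    (hpJ : ∀ X : V, p (J X) = J (p X))
    (h : V → V → ℝ) (hh : ∀ X Y : V, h X Y = ⟪p X, p Y⟫)
    (PiT : V → V → V → V → ℝ)
    (hPi : ∀ X Y Z U : V, PiT X Y Z U = (1/4) * (⟪Y, Z⟫ * ⟪X, U⟫ - ⟪X, Z⟫ * ⟪Y, U⟫ + ⟪J Y, Z⟫ * ⟪J X, U⟫ - ⟪J X, Z⟫ * ⟪J Y, U⟫ - 2 * ⟪J X, Y⟫ * ⟪J Z, U⟫))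
    (PhiT : V → V → V → V → ℝ)
    (hPhi : ∀ X Y Z U : V, PhiT X Y Z U = (1/8) * (⟪Y, Z⟫ * h X U - ⟪X, Z⟫ * h Y U + ⟪X, U⟫ * h Y Z - ⟪Y, U⟫ * h X Z + ⟪J Y, Z⟫ * h (J X) U - ⟪J X, Z⟫ * h (J Y) U + ⟪J X, U⟫ * h (J Y) Z - ⟪J Y, U⟫ * h (J X) Z - 2 * ⟪J X, Y⟫ * h (J Z) U - 2 * ⟪J Z, U⟫ * h (J X) Y))
    (PsiT : V → V → V → V → ℝ)
    (hPsi : ∀ X Y Z U : V, PsiT X Y Z U = -(h (J X) Y * h (J Z) U))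
    (R : V → V → V → V → ℝ) (a b c : ℝ)
    (hR : ∀ X Y Z U : V, R X Y Z U = a * PiT X Y Z U + b * PhiT X Y Z U + c * PsiT X Y Z U)
    (X : V) (hX : ‖X‖ = 1) :
    R X (J X) (J X) X = a + b * ‖p X‖ ^ 2 + c * ‖p X‖ ^ 4 := by
  have key : ∀ v : V, ⟪J v, v⟫ = 0 := by
    intro v
    have h1 := hJi v (J v)
    rw [hJ2, inner_neg_right] at h1
    have h2 : ⟪v, J v⟫ = ⟪J v, v⟫ := real_inner_comm _ _
    linarith
  have key' : ∀ v : V, ⟪v, J v⟫ = 0 := fun v => (real_inner_comm _ _).trans (key v)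
  have hXX : ⟪X, X⟫ = (1:ℝ) := by
    rw [real_inner_self_eq_norm_sq, hX]; norm_num
  have hpp : ⟪p X, p X⟫ = ‖p X‖^2 := real_inner_self_eq_norm_sq _
  rw [hR, hPi, hPhi, hPsi]
  simp only [hh, hpJ, hJ2, map_neg, inner_neg_left, inner_neg_right, hJi, key, key', hXX, hpp]
  ring
end

section
/- Let V be a 4-dimensional real inner product space with orthogonal complex structure J and a 2-dimensional J-invariant subspace D with orthogonal projection p, and let h(X,Y) = ⟨pX,pY⟩. Let e₁, e₂ = Je₁ be an orthonormal basis of D and e₃, e₄ = Je₃ an orthonormal basis of D^⊥. Define the Ricci contraction c(T)(X,Y) = Σᵢ T(eᵢ, X, Y, eᵢ) over the orthonormal basis {e₁,e₂,e₃,e₄}. Then for R = aΠ + bΦ + cΨ with a,b,c ∈ ℝ, the Ricci tensor c(R) satisfies c(R) = λ m + μ h, where m = g - h, λ = (3/2)a + (1/4)b, and μ = (3/2)a + (5/4)b + c. -/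
open RealInnerProductSpace

theorem stmt11 {V : Type*} [NormedAddCommGroup V] [InnerProductSpace ℝ V]
    (J : V →ₗ[ℝ] V) (hJ2 : ∀ X : V, J (J X) = -X)
    (hJi : ∀ X Y : V, ⟪J X, J Y⟫ = ⟪X, Y⟫)
    (p : V →ₗ[ℝ] V) (hp2 : ∀ X : V, p (p X) = p X)
    (hpsa : ∀ X Y : V, ⟪p X, Y⟫ = ⟪X, p Y⟫)
    (hpJ : ∀ X : V, p (J X) = J (p X))
    (h : V → V → ℝ) (hh : ∀ X Y : V, h X Y = ⟪p X, p Y⟫)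
    (PiT : V → V → V → V → ℝ)
    (hPi : ∀ X Y Z U : V, PiT X Y Z U = (1/4) * (⟪Y, Z⟫ * ⟪X, U⟫ - ⟪X, Z⟫ * ⟪Y, U⟫ + ⟪J Y, Z⟫ * ⟪J X, U⟫ - ⟪J X, Z⟫ * ⟪J Y, U⟫ - 2 * ⟪J X, Y⟫ * ⟪J Z, U⟫))
    (PhiT : V → V → V → V → ℝ)
    (hPhi : ∀ X Y Z U : V, PhiT X Y Z U = (1/8) * (⟪Y, Z⟫ * h X U - ⟪X, Z⟫ * h Y U + ⟪X, U⟫ * h Y Z - ⟪Y, U⟫ * h X Z + ⟪J Y, Z⟫ * h (J X) U - ⟪J X, Z⟫ * h (J Y) U + ⟪J X, U⟫ * h (J Y) Z - ⟪J Y, U⟫ * h (J X) Z - 2 * ⟪J X, Y⟫ * h (J Z) U - 2 * ⟪J Z, U⟫ * h (J X) Y))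
    (PsiT : V → V → V → V → ℝ)
    (hPsi : ∀ X Y Z U : V, PsiT X Y Z U = -(h (J X) Y * h (J Z) U))
    (R : V → V → V → V → ℝ) (a b c : ℝ)
    (hR : ∀ X Y Z U : V, R X Y Z U = a * PiT X Y Z U + b * PhiT X Y Z U + c * PsiT X Y Z U)
    (e : Fin 4 → V) (he : Orthonormal ℝ e)
    (he1 : e 1 = J (e 0)) (he3 : e 3 = J (e 2))
    (heD : p (e 0) = e 0) (heD' : p (e 2) = 0)
    (hdim : Module.finrank ℝ V = 4) :
    ∀ X Y : V, (∑ i : Fin 4, R (e i) X Y (e i)) =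
      ((3/2) * a + (1/4) * b) * (⟪X, Y⟫ - h X Y) + ((3/2) * a + (5/4) * b + c) * h X Y := by
  have : FiniteDimensional ℝ V := FiniteDimensional.of_finrank_pos (by rw [hdim]; norm_num)
  let b0 : Module.Basis (Fin 4) ℝ V := basisOfOrthonormalOfCardEqFinrank he (by simp [hdim])
  have hb0 : ⇑b0 = e := coe_basisOfOrthonormalOfCardEqFinrank he _
  let bb : OrthonormalBasis (Fin 4) ℝ V := b0.toOrthonormalBasis (by rw [hb0]; exact he)
  have hbb : ⇑bb = e := by simp [bb, hb0]
  have P : ∀ u v : V, ⟪u, v⟫ = ∑ i : Fin 4, ⟪e i, u⟫ * ⟪e i, v⟫ := by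
    intro u v
    rw [← bb.sum_inner_mul_inner u v, hbb]
    exact Finset.sum_congr rfl fun i _ => by rw [real_inner_comm u (e i)]
  have hJ' : ∀ u v : V, ⟪J u, v⟫ = -⟪u, J v⟫ := by
    intro u v
    have h1 := hJi u (J v)
    rw [hJ2, inner_neg_right] at h1
    linarith
  have hJe0 : J (e 0) = e 1 := he1.symm
  have hJe1 : J (e 1) = -(e 0) := by rw [he1, hJ2]
  have hJe2 : J (e 2) = e 3 := he3.symm
  have hJe3 : J (e 3) = -(e 2) := by rw [he3, hJ2]
  have hpe1 : p (e 1) = e 1 := by rw [he1, hpJ, heD, ← he1]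
  have hpe3 : p (e 3) = 0 := by rw [he3, hpJ, heD', map_zero]
  have hee := orthonormal_iff_ite.mp he
  have key : ∀ (u : V) (k : Fin 4), ⟪e k, p u⟫ = ⟪p (e k), u⟫ := fun u k => (hpsa (e k) u).symm
  intro X Y
  have hXc : ∀ k : Fin 4, ⟪X, e k⟫ = ⟪e k, X⟫ := fun k => (real_inner_comm X (e k)).symm
  have hYc : ∀ k : Fin 4, ⟪Y, e k⟫ = ⟪e k, Y⟫ := fun k => (real_inner_comm Y (e k)).symm
  have hXY : ⟪X, Y⟫ = ⟪e 0, X⟫ * ⟪e 0, Y⟫ + ⟪e 1, X⟫ * ⟪e 1, Y⟫ + ⟪e 2, X⟫ * ⟪e 2, Y⟫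
      + ⟪e 3, X⟫ * ⟪e 3, Y⟫ := by rw [P X Y, Fin.sum_univ_four]
  have hXpY : ⟪X, p Y⟫ = ⟪e 0, X⟫ * ⟪e 0, Y⟫ + ⟪e 1, X⟫ * ⟪e 1, Y⟫ := by
    rw [P X (p Y), Fin.sum_univ_four, key, key, key, key, heD, hpe1, heD', hpe3]
    simp
  simp only [hR, hPi, hPhi, hPsi, hh, Fin.sum_univ_four]
  simp [hpJ, heD, heD', hpe1, hpe3, hJe0, hJe1, hJe2, hJe3, hJ', hee, hpsa, hp2, hXc, hYc, key, he.1,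
    inner_neg_left, inner_neg_right, mul_comm]
  rw [hXY, hXpY]
  ring
end

section
/- Let V be a 4-dimensional real inner product space with orthogonal complex structure J, D a 2-dimensional J-invariant subspace, and J̄ defined by J̄|_D = J|_D, J̄|_{D^⊥} = -J|_{D^⊥}. Let R = aΠ + bΦ + cΨ for real a,b,c (with Π, Φ, Ψ as in the paper). Then R satisfies the second Gray condition with respect to J̄: R(X,Y,Z,W) - R(J̄X, J̄Y, Z, W) = R(J̄X, Y, J̄Z, W) + R(J̄X, Y, Z, J̄W) for all X,Y,Z,W ∈ V. -/
open RealInnerProductSpace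

theorem stmt13 {V : Type*} [NormedAddCommGroup V] [InnerProductSpace ℝ V]
    (J : V →ₗ[ℝ] V) (hJ2 : ∀ X : V, J (J X) = -X)
    (hJi : ∀ X Y : V, ⟪J X, J Y⟫ = ⟪X, Y⟫)
    (p : V →ₗ[ℝ] V) (hp2 : ∀ X : V, p (p X) = p X)
    (hpsa : ∀ X Y : V, ⟪p X, Y⟫ = ⟪X, p Y⟫)
    (hpJ : ∀ X : V, p (J X) = J (p X))
    (h : V → V → ℝ) (hh : ∀ X Y : V, h X Y = ⟪p X, p Y⟫)
    (hdim : Module.finrank ℝ V = 4)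
    (hD2 : Module.finrank ℝ (LinearMap.range p) = 2)
    (Jb : V →ₗ[ℝ] V) (hJb : ∀ X : V, Jb X = J (p X) - J (X - p X))
    (PiT : V → V → V → V → ℝ)
    (hPi : ∀ X Y Z U : V, PiT X Y Z U = (1/4) * (⟪Y, Z⟫ * ⟪X, U⟫ - ⟪X, Z⟫ * ⟪Y, U⟫ + ⟪J Y, Z⟫ * ⟪J X, U⟫ - ⟪J X, Z⟫ * ⟪J Y, U⟫ - 2 * ⟪J X, Y⟫ * ⟪J Z, U⟫))
    (PhiT : V → V → V → V → ℝ)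
    (hPhi : ∀ X Y Z U : V, PhiT X Y Z U = (1/8) * (⟪Y, Z⟫ * h X U - ⟪X, Z⟫ * h Y U + ⟪X, U⟫ * h Y Z - ⟪Y, U⟫ * h X Z + ⟪J Y, Z⟫ * h (J X) U - ⟪J X, Z⟫ * h (J Y) U + ⟪J X, U⟫ * h (J Y) Z - ⟪J Y, U⟫ * h (J X) Z - 2 * ⟪J X, Y⟫ * h (J Z) U - 2 * ⟪J Z, U⟫ * h (J X) Y))
    (PsiT : V → V → V → V → ℝ)
    (hPsi : ∀ X Y Z U : V, PsiT X Y Z U = -(h (J X) Y * h (J Z) U))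
    (R : V → V → V → V → ℝ) (a b c : ℝ)
    (hR : ∀ X Y Z U : V, R X Y Z U = a * PiT X Y Z U + b * PhiT X Y Z U + c * PsiT X Y Z U) :
    ∀ X Y Z W : V,
      R X Y Z W - R (Jb X) (Jb Y) Z W = R (Jb X) Y (Jb Z) W + R (Jb X) Y Z (Jb W) := by
  intro X Y Z W
  have hJ' : ∀ A B : V, ⟪A, J B⟫ = -⟪J A, B⟫ := by
    intro A B
    have := hJi (J A) B
    rw [hJ2, inner_neg_left] at this
    linarith
  have hpsa' : ∀ A B : V, ⟪A, p B⟫ = ⟪p A, B⟫ := fun A B => (hpsa A B).symm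
  have hJb' : ∀ A : V, Jb A = (2:ℝ) • J (p A) - J A := by
    intro A
    rw [hJb, map_sub, two_smul]
    abel
  have zJ : ∀ A : V, ⟪J A, A⟫ = 0 := by
    intro A
    have h1 : ⟪A, J A⟫ = -⟪J A, A⟫ := hJ' A A
    have h2 : ⟪A, J A⟫ = ⟪J A, A⟫ := real_inner_comm (J A) A
    linarith
  have zJp : ∀ A : V, ⟪J (p A), A⟫ = 0 := by
    intro A
    calc ⟪J (p A), A⟫ = ⟪p (J (p A)), A⟫ := by rw [hpJ, hp2]
      _ = ⟪J (p A), p A⟫ := hpsa _ _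
      _ = 0 := zJ (p A)
  simp only [hR, hPi, hPhi, hPsi, hh, hJb', map_sub, map_smul, map_neg, hJ2, hp2, hpJ,
    inner_sub_left, inner_sub_right, inner_smul_left, inner_smul_right, inner_neg_left,
    inner_neg_right, hJ', hpsa', hJi, smul_eq_mul, zJ, zJp, starRingEnd_apply, star_trivial]
  have e1 : ∀ A B : V, ⟪J A, B⟫ = -⟪J B, A⟫ := by
    intro A B
    rw [real_inner_comm, hJ']
  have e2 : ∀ A B : V, ⟪p A, B⟫ = ⟪p B, A⟫ := by
    intro A B
    rw [hpsa, real_inner_comm]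
  have e3 : ∀ A B : V, ⟪J (p A), B⟫ = -⟪J (p B), A⟫ := by
    intro A B
    rw [real_inner_comm, hJ', hpsa', hpJ]
  simp only [real_inner_comm Y X, real_inner_comm Z X, real_inner_comm Z Y,
    real_inner_comm W X, real_inner_comm W Y, real_inner_comm W Z,
    e1 Y X, e1 Z X, e1 Z Y, e1 W X, e1 W Y, e1 W Z,
    e2 Y X, e2 Z X, e2 Z Y, e2 W X, e2 W Y, e2 W Z,
    e3 Y X, e3 Z X, e3 Z Y, e3 W X, e3 W Y, e3 W Z]
  ring
end

section
/- Let V be a 4-dimensional oriented real inner product space with orthogonal complex structure J compatible with the orientation, D a 2-dimensional J-invariant subspace, h the projection bilinear form onto D, and K = (1/6)Π - Φ + Ψ. Then the Ricci contraction of K vanishes: for all X, Y ∈ V, Σᵢ K(eᵢ, X, Y, eᵢ) = 0 for any orthonormal basis {eᵢ}. -/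
open RealInnerProductSpace

theorem stmt15 {V : Type*} [NormedAddCommGroup V] [InnerProductSpace ℝ V]
    (J : V →ₗ[ℝ] V) (hJ2 : ∀ X : V, J (J X) = -X)
    (hJi : ∀ X Y : V, ⟪J X, J Y⟫ = ⟪X, Y⟫)
    (p : V →ₗ[ℝ] V) (hp2 : ∀ X : V, p (p X) = p X)
    (hpsa : ∀ X Y : V, ⟪p X, Y⟫ = ⟪X, p Y⟫)
    (hpJ : ∀ X : V, p (J X) = J (p X))
    (h : V → V → ℝ) (hh : ∀ X Y : V, h X Y = ⟪p X, p Y⟫)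
    (hdim : Module.finrank ℝ V = 4)
    (hD2 : Module.finrank ℝ (LinearMap.range p) = 2)
    (PiT : V → V → V → V → ℝ)
    (hPi : ∀ X Y Z U : V, PiT X Y Z U = (1/4) * (⟪Y, Z⟫ * ⟪X, U⟫ - ⟪X, Z⟫ * ⟪Y, U⟫ + ⟪J Y, Z⟫ * ⟪J X, U⟫ - ⟪J X, Z⟫ * ⟪J Y, U⟫ - 2 * ⟪J X, Y⟫ * ⟪J Z, U⟫))
    (PhiT : V → V → V → V → ℝ)
    (hPhi : ∀ X Y Z U : V, PhiT X Y Z U = (1/8) * (⟪Y, Z⟫ * h X U - ⟪X, Z⟫ * h Y U + ⟪X, U⟫ * h Y Z - ⟪Y, U⟫ * h X Z + ⟪J Y, Z⟫ * h (J X) U - ⟪J X, Z⟫ * h (J Y) U + ⟪J X, U⟫ * h (J Y) Z - ⟪J Y, U⟫ * h (J X) Z - 2 * ⟪J X, Y⟫ * h (J Z) U - 2 * ⟪J Z, U⟫ * h (J X) Y))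
    (PsiT : V → V → V → V → ℝ)
    (hPsi : ∀ X Y Z U : V, PsiT X Y Z U = -(h (J X) Y * h (J Z) U))
    (K : V → V → V → V → ℝ)
    (hK : ∀ X Y Z U : V, K X Y Z U = (1/6) * PiT X Y Z U - PhiT X Y Z U + PsiT X Y Z U) :
    ∀ (e : Fin 4 → V), Orthonormal ℝ e →
      ∀ X Y : V, (∑ i : Fin 4, K (e i) X Y (e i)) = 0 := by
  intro e he X Y
  haveI : FiniteDimensional ℝ V := Module.finite_of_finrank_eq_succ (n := 3) (by rw [hdim])
  -- `e` is an orthonormal basis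
  have hcard : Fintype.card (Fin 4) = Module.finrank ℝ V := by simp [hdim]
  let bV : Module.Basis (Fin 4) ℝ V := basisOfOrthonormalOfCardEqFinrank he hcard
  have hbV : ⇑bV = e := coe_basisOfOrthonormalOfCardEqFinrank he hcard
  let b : OrthonormalBasis (Fin 4) ℝ V := bV.toOrthonormalBasis (by rwa [hbV])
  have hb : ∀ i, b i = e i := by
    intro i
    show (bV.toOrthonormalBasis _ : Fin 4 → V) i = e i
    rw [Module.Basis.coe_toOrthonormalBasis, hbV]
  have key : ∀ a c : V, ∑ i : Fin 4, ⟪a, e i⟫ * ⟪e i, c⟫ = ⟪a, c⟫ := by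
    intro a c
    have := b.sum_inner_mul_inner a c
    simp only [hb] at this
    exact this
  -- skew-symmetry of J
  have hskew : ∀ a c : V, ⟪J a, c⟫ = -⟪a, J c⟫ := by
    intro a c
    have h1 : ⟪J a, J (J c)⟫ = ⟪a, J c⟫ := hJi a (J c)
    rw [hJ2 c, inner_neg_right] at h1
    linarith
  have hskewR : ∀ a c : V, ⟪a, J c⟫ = -⟪J a, c⟫ := by
    intro a c
    rw [hskew]; ring
  have hJv0 : ∀ v : V, ⟪v, J v⟫ = (0 : ℝ) := by
    intro v
    have h1 := hskew v v
    have h2 : ⟪J v, v⟫ = ⟪v, J v⟫ := real_inner_comm _ _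
    linarith
  have hone : ∀ i, ⟪e i, e i⟫ = (1 : ℝ) := by
    intro i
    have := orthonormal_iff_ite.mp he i i
    simpa using this
  -- diagonal sums
  have S1 : ∑ i : Fin 4, ⟪e i, e i⟫ = (4 : ℝ) := by
    rw [Finset.sum_congr rfl fun i _ => hone i]
    simp
  have S3 : ∑ i : Fin 4, ⟪e i, J (e i)⟫ = (0 : ℝ) := by
    rw [Finset.sum_congr rfl fun i _ => hJv0 (e i)]
    simp
  have S4 : ∑ i : Fin 4, ⟪e i, J (p (e i))⟫ = (0 : ℝ) := by
    have step : ∀ v : V, ⟪v, J (p v)⟫ = (0 : ℝ) := by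
      intro v
      have h0 : J (p v) = p (J (p v)) := by rw [hpJ, hp2]
      rw [h0, ← hpsa, hJv0]
    rw [Finset.sum_congr rfl fun i _ => step (e i)]
    simp
  -- trace of p over the orthonormal basis is 2
  have S2 : ∑ i : Fin 4, ⟪e i, p (e i)⟫ = (2 : ℝ) := by
    set W := LinearMap.range p with hW
    let f : OrthonormalBasis (Fin (Module.finrank ℝ W)) ℝ W := stdOrthonormalBasis ℝ W
    have hpf : ∀ j, p ((f j : W) : V) = ((f j : W) : V) := by
      intro j
      obtain ⟨u, hu⟩ := (f j).2
      rw [← hu, hp2]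
    have hprep : ∀ v : V, p v = ∑ j, ⟪((f j : W) : V), v⟫ • ((f j : W) : V) := by
      intro v
      have hm : p v ∈ W := ⟨v, rfl⟩
      have h1 := f.sum_repr' (⟨p v, hm⟩ : W)
      have h2 := congrArg (Subtype.val) h1
      simp only [Submodule.coe_sum, SetLike.val_smul, Submodule.coe_inner] at h2
      rw [← h2]
      refine Finset.sum_congr rfl fun j _ => ?_
      rw [← hpsa, hpf]
    have step : ∀ i, ⟪e i, p (e i)⟫ = ∑ j, ⟪((f j : W) : V), e i⟫ * ⟪e i, ((f j : W) : V)⟫ := by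
      intro i
      rw [hprep (e i), inner_sum]
      refine Finset.sum_congr rfl fun j _ => ?_
      rw [real_inner_smul_right]
    rw [Finset.sum_congr rfl fun i _ => step i, Finset.sum_comm]
    have val : ∀ j, ∑ i : Fin 4, ⟪((f j : W) : V), e i⟫ * ⟪e i, ((f j : W) : V)⟫ = (1 : ℝ) := by
      intro j
      rw [key]
      have hfo := orthonormal_iff_ite.mp f.orthonormal j j
      simp only [if_pos rfl] at hfo
      rw [← Submodule.coe_inner]
      exact hfo
    rw [Finset.sum_congr rfl fun j _ => val j]
    simp [hD2]
  -- product sums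
  have S5 : ∑ i : Fin 4, ⟪e i, Y⟫ * ⟪X, e i⟫ = ⟪X, Y⟫ := by
    rw [Finset.sum_congr rfl fun i _ => mul_comm (⟪e i, Y⟫) (⟪X, e i⟫), key]
  have S6 : ∑ i : Fin 4, ⟪e i, J Y⟫ * ⟪X, J (e i)⟫ = -⟪X, Y⟫ := by
    have step : ∀ i : Fin 4, ⟪e i, J Y⟫ * ⟪X, J (e i)⟫ = -(⟪J X, e i⟫ * ⟪e i, J Y⟫) := by
      intro i; rw [hskewR X (e i)]; ring
    rw [Finset.sum_congr rfl fun i _ => step i, Finset.sum_neg_distrib, key, hJi]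
  have S7 : ∑ i : Fin 4, ⟪e i, J X⟫ * ⟪Y, J (e i)⟫ = -⟪X, Y⟫ := by
    have step : ∀ i : Fin 4, ⟪e i, J X⟫ * ⟪Y, J (e i)⟫ = -(⟪J Y, e i⟫ * ⟪e i, J X⟫) := by
      intro i; rw [hskewR Y (e i)]; ring
    rw [Finset.sum_congr rfl fun i _ => step i, Finset.sum_neg_distrib, key, hJi,
      real_inner_comm Y X]
  have S8 : ∑ i : Fin 4, ⟪e i, Y⟫ * ⟪X, p (e i)⟫ = ⟪X, p Y⟫ := by
    have step : ∀ i : Fin 4, ⟪e i, Y⟫ * ⟪X, p (e i)⟫ = ⟪p X, e i⟫ * ⟪e i, Y⟫ := by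
      intro i; rw [hpsa X (e i)]; ring
    rw [Finset.sum_congr rfl fun i _ => step i, key, hpsa]
  have S9 : ∑ i : Fin 4, ⟪X, e i⟫ * ⟪e i, p Y⟫ = ⟪X, p Y⟫ := key X (p Y)
  have S10 : ∑ i : Fin 4, ⟪e i, J Y⟫ * ⟪X, J (p (e i))⟫ = -⟪X, p Y⟫ := by
    have step : ∀ i : Fin 4, ⟪e i, J Y⟫ * ⟪X, J (p (e i))⟫
        = -(⟪J (p X), e i⟫ * ⟪e i, J Y⟫) := by
      intro i; rw [hskewR X (p (e i)), ← hpsa, hpJ]; ring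
    rw [Finset.sum_congr rfl fun i _ => step i, Finset.sum_neg_distrib, key, hJi, hpsa]
  have S11 : ∑ i : Fin 4, ⟪X, J (e i)⟫ * ⟪e i, J (p Y)⟫ = -⟪X, p Y⟫ := by
    have step : ∀ i : Fin 4, ⟪X, J (e i)⟫ * ⟪e i, J (p Y)⟫
        = -(⟪J X, e i⟫ * ⟪e i, J (p Y)⟫) := by
      intro i; rw [hskewR X (e i)]; ring
    rw [Finset.sum_congr rfl fun i _ => step i, Finset.sum_neg_distrib, key, hJi]
  have S12 : ∑ i : Fin 4, ⟪e i, J X⟫ * ⟪Y, J (p (e i))⟫ = -⟪X, p Y⟫ := by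
    have step : ∀ i : Fin 4, ⟪e i, J X⟫ * ⟪Y, J (p (e i))⟫
        = -(⟪J (p Y), e i⟫ * ⟪e i, J X⟫) := by
      intro i; rw [hskewR Y (p (e i)), ← hpsa, hpJ]; ring
    rw [Finset.sum_congr rfl fun i _ => step i, Finset.sum_neg_distrib, key, hJi]
    have h1 : ⟪p Y, X⟫ = ⟪Y, p X⟫ := hpsa Y X
    have h2 : ⟪X, p Y⟫ = ⟪p Y, X⟫ := real_inner_comm (p Y) X
    have h3 : ⟪p X, Y⟫ = ⟪X, p Y⟫ := hpsa X Y
    have h4 : ⟪Y, p X⟫ = ⟪p X, Y⟫ := real_inner_comm (p X) Y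
    linarith
  have S13 : ∑ i : Fin 4, ⟪Y, J (e i)⟫ * ⟪e i, J (p X)⟫ = -⟪X, p Y⟫ := by
    have step : ∀ i : Fin 4, ⟪Y, J (e i)⟫ * ⟪e i, J (p X)⟫
        = -(⟪J Y, e i⟫ * ⟪e i, J (p X)⟫) := by
      intro i; rw [hskewR Y (e i)]; ring
    rw [Finset.sum_congr rfl fun i _ => step i, Finset.sum_neg_distrib, key, hJi]
    have h3 : ⟪p X, Y⟫ = ⟪X, p Y⟫ := hpsa X Y
    have h4 : ⟪Y, p X⟫ = ⟪p X, Y⟫ := real_inner_comm (p X) Y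
    linarith
  have S14 : ∑ i : Fin 4, ⟪e i, J (p X)⟫ * ⟪Y, J (p (e i))⟫ = -⟪X, p Y⟫ := by
    have step : ∀ i : Fin 4, ⟪e i, J (p X)⟫ * ⟪Y, J (p (e i))⟫
        = -(⟪J (p Y), e i⟫ * ⟪e i, J (p X)⟫) := by
      intro i; rw [hskewR Y (p (e i)), ← hpsa, hpJ]; ring
    rw [Finset.sum_congr rfl fun i _ => step i, Finset.sum_neg_distrib, key, hJi, hpsa, hp2]
    have h3 : ⟪p X, Y⟫ = ⟪X, p Y⟫ := hpsa X Y
    have h4 : ⟪Y, p X⟫ = ⟪p X, Y⟫ := real_inner_comm (p X) Y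
    linarith
  -- pointwise normal form of the summand
  have hpoint : ∀ i : Fin 4, K (e i) X Y (e i) =
      (1/24 * ⟪X, Y⟫ - 1/8 * ⟪X, p Y⟫) * ⟪e i, e i⟫
      + (-(1/8) * ⟪X, Y⟫) * ⟪e i, p (e i)⟫
      + (1/24 * ⟪X, J Y⟫ - 1/8 * ⟪X, J (p Y)⟫) * ⟪e i, J (e i)⟫
      + (-(1/8) * ⟪X, J Y⟫) * ⟪e i, J (p (e i))⟫
      + (-(1/24)) * (⟪e i, Y⟫ * ⟪X, e i⟫)
      + (-(1/24)) * (⟪e i, J Y⟫ * ⟪X, J (e i)⟫)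
      + (-(1/12)) * (⟪e i, J X⟫ * ⟪Y, J (e i)⟫)
      + (1/8) * (⟪e i, Y⟫ * ⟪X, p (e i)⟫)
      + (1/8) * (⟪X, e i⟫ * ⟪e i, p Y⟫)
      + (1/8) * (⟪e i, J Y⟫ * ⟪X, J (p (e i))⟫)
      + (1/8) * (⟪X, J (e i)⟫ * ⟪e i, J (p Y)⟫)
      + (1/4) * (⟪e i, J X⟫ * ⟪Y, J (p (e i))⟫)
      + (1/4) * (⟪Y, J (e i)⟫ * ⟪e i, J (p X)⟫)
      + (-1) * (⟪e i, J (p X)⟫ * ⟪Y, J (p (e i))⟫) := by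
    intro i
    rw [hK, hPi, hPhi, hPsi]
    simp only [hh, hpsa, hp2, hpJ, hskew]
    ring
  rw [Finset.sum_congr rfl fun i _ => hpoint i]
  simp only [Finset.sum_add_distrib, ← Finset.mul_sum]
  rw [S1, S2, S3, S4, S5, S6, S7, S8, S9, S10, S11, S12, S13, S14]
  ring
end

section
/- Let V be a 4-dimensional real inner product space with orthogonal complex structure J, D a 2-dimensional J-invariant subspace, and K = (1/6)Π - Φ + Ψ. Then K satisfies the first Bianchi identity: K(X,Y,Z,U) + K(Y,Z,X,U) + K(Z,X,Y,U) = 0 for all X,Y,Z,U ∈ V. -/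
open RealInnerProductSpace

-- auxiliary: skew-symmetry of (x,y) ↦ ⟪J x, y⟫
private lemma aux_skew16 {V : Type*} [NormedAddCommGroup V] [InnerProductSpace ℝ V]
    (J : V →ₗ[ℝ] V) (hJ2 : ∀ X : V, J (J X) = -X)
    (hJi : ∀ X Y : V, ⟪J X, J Y⟫ = ⟪X, Y⟫) :
    ∀ a b : V, ⟪J a, b⟫ = -⟪J b, a⟫ := by
  intro a b
  have := hJi a (J b)
  rw [hJ2] at this
  simp only [inner_neg_right] at this
  have h2 := real_inner_comm a (J b)
  linarith [this, h2]

-- the core algebraic vanishing: if a•x+b•y+c•z = 0 with a ≠ 0 then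
-- the cyclic sum vanishes
private lemma aux_gcase16 {V : Type*} [NormedAddCommGroup V] [InnerProductSpace ℝ V]
    (J : V →ₗ[ℝ] V) (hsk : ∀ a b : V, ⟪J a, b⟫ = -⟪J b, a⟫)
    (x y z u : V) (a b c : ℝ) (ha : a ≠ 0)
    (hrel : a • x + b • y + c • z = 0) :
    ⟪J x, y⟫ * ⟪J z, u⟫ + ⟪J y, z⟫ * ⟪J x, u⟫ + ⟪J z, x⟫ * ⟪J y, u⟫ = 0 := by
  have kL : ∀ w : V, a * ⟪J x, w⟫ + b * ⟪J y, w⟫ + c * ⟪J z, w⟫ = 0 := by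
    intro w
    have h0 : ⟪J (a • x + b • y + c • z), w⟫ = (0 : ℝ) := by rw [hrel]; simp
    simp only [map_add, LinearMap.map_smul, inner_add_left, real_inner_smul_left] at h0
    linear_combination h0
  have kR : ∀ w : V, a * ⟪J w, x⟫ + b * ⟪J w, y⟫ + c * ⟪J w, z⟫ = 0 := by
    intro w
    have h0 : ⟪J w, a • x + b • y + c • z⟫ = (0 : ℝ) := by rw [hrel]; simp
    simp only [inner_add_right, real_inner_smul_right] at h0
    linear_combination h0
  have hyy : ⟪J y, y⟫ = (0 : ℝ) := by have := hsk y y; linarith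
  have hzz : ⟪J z, z⟫ = (0 : ℝ) := by have := hsk z z; linarith
  have hzy0 : ⟪J z, y⟫ + ⟪J y, z⟫ = (0 : ℝ) := by have := hsk z y; linarith
  have key : a * (⟪J x, y⟫ * ⟪J z, u⟫ + ⟪J y, z⟫ * ⟪J x, u⟫ + ⟪J z, x⟫ * ⟪J y, u⟫) = 0 := by
    linear_combination (⟪J z, u⟫) * (kL y) + (⟪J y, z⟫) * (kL u) + (⟪J y, u⟫) * (kR z)
      - b * ⟪J z, u⟫ * hyy - (c * ⟪J z, u⟫ + b * ⟪J y, u⟫) * hzy0 - c * ⟪J y, u⟫ * hzz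
  exact (mul_eq_zero.mp key).resolve_left ha

private lemma aux_gvan16 {V : Type*} [NormedAddCommGroup V] [InnerProductSpace ℝ V]
    (J : V →ₗ[ℝ] V) (hsk : ∀ a b : V, ⟪J a, b⟫ = -⟪J b, a⟫)
    (x y z u : V) (a b c : ℝ) (hne : a ≠ 0 ∨ b ≠ 0 ∨ c ≠ 0)
    (hrel : a • x + b • y + c • z = 0) :
    ⟪J x, y⟫ * ⟪J z, u⟫ + ⟪J y, z⟫ * ⟪J x, u⟫ + ⟪J z, x⟫ * ⟪J y, u⟫ = 0 := by
  rcases hne with ha | hb | hc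
  · exact aux_gcase16 J hsk x y z u a b c ha hrel
  · have h := aux_gcase16 J hsk y z x u b c a hb (by rw [← hrel]; abel)
    linear_combination h
  · have h := aux_gcase16 J hsk z x y u c a b hc (by rw [← hrel]; abel)
    linear_combination h

private lemma aux_psi16 {V : Type*} [NormedAddCommGroup V] [InnerProductSpace ℝ V]
    (J : V →ₗ[ℝ] V) (hsk : ∀ a b : V, ⟪J a, b⟫ = -⟪J b, a⟫)
    (p : V →ₗ[ℝ] V)
    (hdim : Module.finrank ℝ V = 4)
    (hD2 : Module.finrank ℝ (LinearMap.range p) = 2)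
    (x y z u : V) :
    ⟪J (p x), p y⟫ * ⟪J (p z), p u⟫ + ⟪J (p y), p z⟫ * ⟪J (p x), p u⟫
      + ⟪J (p z), p x⟫ * ⟪J (p y), p u⟫ = 0 := by
  have hfd : FiniteDimensional ℝ V := FiniteDimensional.of_finrank_pos (by omega)
  set D := LinearMap.range p with hD
  let v : Fin 3 → D := ![⟨p x, LinearMap.mem_range_self p x⟩,
    ⟨p y, LinearMap.mem_range_self p y⟩, ⟨p z, LinearMap.mem_range_self p z⟩]
  have hnli : ¬ LinearIndependent ℝ v := by
    intro hli
    have := hli.fintype_card_le_finrank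
    rw [hD2] at this
    simp at this
  rw [Fintype.not_linearIndependent_iff] at hnli
  obtain ⟨g, hg, i, hi⟩ := hnli
  have hrel : g 0 • p x + g 1 • p y + g 2 • p z = 0 := by
    have := congrArg (Subtype.val) hg
    simpa [v, Fin.sum_univ_three] using this
  have hne : g 0 ≠ 0 ∨ g 1 ≠ 0 ∨ g 2 ≠ 0 := by
    fin_cases i
    · exact Or.inl hi
    · exact Or.inr (Or.inl hi)
    · exact Or.inr (Or.inr hi)
  exact aux_gvan16 J hsk (p x) (p y) (p z) (p u) (g 0) (g 1) (g 2) hne hrel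

theorem stmt16 {V : Type*} [NormedAddCommGroup V] [InnerProductSpace ℝ V]
    (J : V →ₗ[ℝ] V) (hJ2 : ∀ X : V, J (J X) = -X)
    (hJi : ∀ X Y : V, ⟪J X, J Y⟫ = ⟪X, Y⟫)
    (p : V →ₗ[ℝ] V) (hp2 : ∀ X : V, p (p X) = p X)
    (hpsa : ∀ X Y : V, ⟪p X, Y⟫ = ⟪X, p Y⟫)
    (hpJ : ∀ X : V, p (J X) = J (p X))
    (h : V → V → ℝ) (hh : ∀ X Y : V, h X Y = ⟪p X, p Y⟫)
    (hdim : Module.finrank ℝ V = 4)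
    (hD2 : Module.finrank ℝ (LinearMap.range p) = 2)
    (PiT : V → V → V → V → ℝ)
    (hPi : ∀ X Y Z U : V, PiT X Y Z U = (1/4) * (⟪Y, Z⟫ * ⟪X, U⟫ - ⟪X, Z⟫ * ⟪Y, U⟫ + ⟪J Y, Z⟫ * ⟪J X, U⟫ - ⟪J X, Z⟫ * ⟪J Y, U⟫ - 2 * ⟪J X, Y⟫ * ⟪J Z, U⟫))
    (PhiT : V → V → V → V → ℝ)
    (hPhi : ∀ X Y Z U : V, PhiT X Y Z U = (1/8) * (⟪Y, Z⟫ * h X U - ⟪X, Z⟫ * h Y U + ⟪X, U⟫ * h Y Z - ⟪Y, U⟫ * h X Z + ⟪J Y, Z⟫ * h (J X) U - ⟪J X, Z⟫ * h (J Y) U + ⟪J X, U⟫ * h (J Y) Z - ⟪J Y, U⟫ * h (J X) Z - 2 * ⟪J X, Y⟫ * h (J Z) U - 2 * ⟪J Z, U⟫ * h (J X) Y))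
    (PsiT : V → V → V → V → ℝ)
    (hPsi : ∀ X Y Z U : V, PsiT X Y Z U = -(h (J X) Y * h (J Z) U))
    (K : V → V → V → V → ℝ)
    (hK : ∀ X Y Z U : V, K X Y Z U = (1/6) * PiT X Y Z U - PhiT X Y Z U + PsiT X Y Z U) :
    ∀ X Y Z U : V, K X Y Z U + K Y Z X U + K Z X Y U = 0 := by
  have hsk : ∀ a b : V, ⟪J a, b⟫ = -⟪J b, a⟫ := aux_skew16 J hJ2 hJi
  intro X Y Z U
  have hpsi := aux_psi16 J hsk p hdim hD2 X Y Z U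
  rw [hsk (p Z) (p X)] at hpsi
  simp only [hK, hPi, hPhi, hPsi, hh, hpJ]
  rw [hsk Z X, hsk Y X, hsk Z Y,
    hsk (p Z) (p X), hsk (p Y) (p X), hsk (p Z) (p Y),
    real_inner_comm Z X, real_inner_comm Y X, real_inner_comm Z Y,
    real_inner_comm (p Z) (p X), real_inner_comm (p Y) (p X), real_inner_comm (p Z) (p Y)]
  linear_combination -hpsi
end
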